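/- arXiv:2505.18919 — 5 statements merged into one kernel-verified Lean document; each statement's English description precedes it below -/
import Mathlib

section
/- Let U be a finite set of n element types partitioned into two nonempty groups L and H with |L| = n_l and |H| = n_h = n − n_l, and let f : U → ℝ assign a strictly positive frequency to each element. Let w_l and w_h be positive integers with w_l + w_h = w and w_l · n = n_l · w (i.e., w_l = (n_l/n)·w). Suppose h_L : L → {1,…,w_l} and h_H : H → {1,…,w_h} are surjective hash functions, with bucket counts C^L_i = Σ_{e ∈ L, h_L(e) = i} f(e) and C^H_i = Σ_{e ∈ H, h_H(e) = i} f(e). Then the average approximation factors of the two groups are equal: (1/n_l) Σ_{e ∈ L} f(e)/C^L_{h_L(e)} = (1/n_h) Σ_{e ∈ H} f(e)/C^H_{h_H(e)} = w/n. -/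
open Finset

lemma sum_div_bucket {A : Type*} [Fintype A] {k : ℕ} (g : A → Fin k)
    (hs : Function.Surjective g) (f : A → ℝ) (hf : ∀ a, 0 < f a)
    (C : Fin k → ℝ) (hC : ∀ i, C i = ∑ a : A, if g a = i then f a else 0) :
    ∑ a : A, f a / C (g a) = k := by
  have hCpos : ∀ i, 0 < C i := by
    intro i
    obtain ⟨a, ha⟩ := hs i
    rw [hC i]
    apply Finset.sum_pos' (fun b _ => by split <;> simp [(hf b).le])
    exact ⟨a, mem_univ a, by simp [ha]; exact hf a⟩
  have : ∑ a : A, f a / C (g a) = ∑ i : Fin k, ∑ a ∈ univ.filter (fun a => g a = i), f a / C i := by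
    rw [← Finset.sum_fiberwise (g := g) (f := fun a => f a / C (g a))]
    apply Finset.sum_congr rfl; intro i _
    apply Finset.sum_congr rfl; intro a ha
    rw [mem_filter] at ha; rw [ha.2]
  rw [this]
  have : ∀ i : Fin k, ∑ a ∈ univ.filter (fun a => g a = i), f a / C i = 1 := by
    intro i
    rw [← Finset.sum_div, Finset.sum_filter, ← hC i, div_self (hCpos i).ne']
  simp [this]

/-- A group-aware semi-uniform single-row Count-Min sketch with two groups `L`, `H`
and bucket allocation `w_l = (n_l / n) * w` is group-fair: both groups have average
approximation factor `w / n`. -/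
theorem fcm_two_groups_fair
    {U : Type*} [Fintype U] [DecidableEq U] (L H : Finset U)
    (hLne : L.Nonempty) (hHne : H.Nonempty)
    (hdisj : Disjoint L H) (hunion : L ∪ H = Finset.univ)
    (n nl nh : ℕ) (hn : Fintype.card U = n) (hnl : L.card = nl) (hnh : H.card = nh)
    (hnhn : nh = n - nl)
    (f : U → ℝ) (hf : ∀ e, 0 < f e)
    (wl wh w : ℕ) (hwl : 0 < wl) (hwh : 0 < wh) (hw : wl + wh = w)
    (hprop : wl * n = nl * w)
    (hL : {e // e ∈ L} → Fin wl) (hH : {e // e ∈ H} → Fin wh)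
    (hLs : Function.Surjective hL) (hHs : Function.Surjective hH)
    (CL : Fin wl → ℝ) (CH : Fin wh → ℝ)
    (hCL : ∀ i, CL i = ∑ e : {e // e ∈ L}, if hL e = i then f e.1 else 0)
    (hCH : ∀ i, CH i = ∑ e : {e // e ∈ H}, if hH e = i then f e.1 else 0) :
    (1 / (nl : ℝ)) * (∑ e : {e // e ∈ L}, f e.1 / CL (hL e)) = (w : ℝ) / n ∧
    (1 / (nh : ℝ)) * (∑ e : {e // e ∈ H}, f e.1 / CH (hH e)) = (w : ℝ) / n := by
  have hnln : nl + nh = n := by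
    rw [← hnl, ← hnh, ← Finset.card_union_of_disjoint hdisj, hunion, Finset.card_univ, hn]
  have hnlpos : 0 < nl := hnl ▸ Finset.card_pos.mpr hLne
  have hnhpos : 0 < nh := hnh ▸ Finset.card_pos.mpr hHne
  have hnpos : 0 < n := by omega
  have hsumL : ∑ e : {e // e ∈ L}, f e.1 / CL (hL e) = wl :=
    sum_div_bucket hL hLs (fun e => f e.1) (fun e => hf e.1) CL hCL
  have hsumH : ∑ e : {e // e ∈ H}, f e.1 / CH (hH e) = wh :=
    sum_div_bucket hH hHs (fun e => f e.1) (fun e => hf e.1) CH hCH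
  have hR : (wl : ℝ) * n = nl * w := by exact_mod_cast hprop
  have hwR : (wl : ℝ) + wh = w := by exact_mod_cast hw
  have hnR : (nl : ℝ) + nh = n := by exact_mod_cast hnln
  have hR2 : (wh : ℝ) * n = nh * w := by nlinarith [hR, hwR, hnR]
  have hnlne : (nl : ℝ) ≠ 0 := by positivity
  have hnhne : (nh : ℝ) ≠ 0 := by positivity
  have hnne : (n : ℝ) ≠ 0 := by positivity
  constructor
  · rw [hsumL]; field_simp; linarith [hR]
  · rw [hsumH]; field_simp; linarith [hR2]
end

section
/- Let U be a finite set of n element types partitioned into ℓ nonempty groups g_1,…,g_ℓ with |g_j| = n_j, and let f : U → ℝ assign a strictly positive frequency to each element. For each j let w_j be a positive integer with n · w_j = n_j · w where w = Σ_{j=1}^ℓ w_j, and let h_j : g_j → {1,…,w_j} be a surjective hash function with bucket counts C^j_i = Σ_{e ∈ g_j, h_j(e) = i} f(e). Then every group's average approximation factor equals w/n: for all j, (1/n_j) Σ_{e ∈ g_j} f(e)/C^j_{h_j(e)} = w/n; in particular all pairs of groups have equal average approximation factors. -/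
open Finset

/-- A group-aware semi-uniform single-row Count-Min sketch with `ℓ` groups and
proportional bucket allocation `n * w_j = n_j * w` is group-fair: every group's
average approximation factor equals `w / n`; in particular all pairs of groups
have equal average approximation factors. -/
theorem fcm_multi_groups_fair
    {U : Type*} [Fintype U] [DecidableEq U]
    (ℓ : ℕ) (g : Fin ℓ → Finset U)
    (hne : ∀ j, (g j).Nonempty)
    (hdisj : ∀ j j', j ≠ j' → Disjoint (g j) (g j'))
    (hcover : ∀ e : U, ∃ j, e ∈ g j)
    (n : ℕ) (hn : Fintype.card U = n)
    (nj : Fin ℓ → ℕ) (hnj : ∀ j, (g j).card = nj j)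
    (f : U → ℝ) (hf : ∀ e, 0 < f e)
    (w : ℕ) (wj : Fin ℓ → ℕ) (hwj : ∀ j, 0 < wj j)
    (hw : w = ∑ j, wj j) (hprop : ∀ j, n * wj j = nj j * w)
    (h : (j : Fin ℓ) → {e // e ∈ g j} → Fin (wj j))
    (hs : ∀ j, Function.Surjective (h j))
    (C : (j : Fin ℓ) → Fin (wj j) → ℝ)
    (hC : ∀ j i, C j i = ∑ e : {x // x ∈ g j}, if h j e = i then f e.1 else 0) :
    (∀ j, (1 / (nj j : ℝ)) * (∑ e : {x // x ∈ g j}, f e.1 / C j (h j e)) = (w : ℝ) / n) ∧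
    (∀ j j', (1 / (nj j : ℝ)) * (∑ e : {x // x ∈ g j}, f e.1 / C j (h j e))
      = (1 / (nj j' : ℝ)) * (∑ e : {x // x ∈ g j'}, f e.1 / C j' (h j' e))) := by
  have key : ∀ j, (1 / (nj j : ℝ)) * (∑ e : {x // x ∈ g j}, f e.1 / C j (h j e)) = (w : ℝ) / n := by
    intro j
    have hCpos : ∀ i, 0 < C j i := by
      intro i
      obtain ⟨e0, he0⟩ := hs j i
      rw [hC]
      apply Finset.sum_pos' (fun e _ => by split_ifs; exacts [le_of_lt (hf _), le_rfl])
      exact ⟨e0, Finset.mem_univ _, by rw [if_pos he0]; exact hf _⟩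
    have hsum : (∑ e : {x // x ∈ g j}, f e.1 / C j (h j e)) = (wj j : ℝ) := by
      have step : ∀ e : {x // x ∈ g j}, f e.1 / C j (h j e)
          = ∑ i : Fin (wj j), (if h j e = i then f e.1 else 0) / C j i := by
        intro e
        have h2 : ∀ i, (if h j e = i then f e.1 else 0) / C j i
            = if h j e = i then f e.1 / C j i else 0 := fun i => by split_ifs <;> simp
        rw [Finset.sum_congr rfl fun i _ => h2 i, Finset.sum_ite_eq]
        simp
      have : (∑ e : {x // x ∈ g j}, f e.1 / C j (h j e))
          = ∑ i : Fin (wj j), ∑ e : {x // x ∈ g j}, (if h j e = i then f e.1 else 0) / C j i := by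
        rw [Finset.sum_congr rfl fun e _ => step e, Finset.sum_comm]
      rw [this]
      have : ∀ i : Fin (wj j),
          (∑ e : {x // x ∈ g j}, (if h j e = i then f e.1 else 0) / C j i) = 1 := by
        intro i
        rw [← Finset.sum_div, ← hC, div_self (ne_of_gt (hCpos i))]
      simp only [Finset.univ_eq_attach] at this
      simp [this]
    rw [hsum]
    have hnjpos : 0 < nj j := by rw [← hnj]; exact Finset.card_pos.2 (hne j)
    have hnpos : 0 < n := by
      rw [← hn]
      calc 0 < nj j := hnjpos
        _ = (g j).card := (hnj j).symm
        _ ≤ Fintype.card U := Finset.card_le_univ _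
    have hp := hprop j
    have : (n : ℝ) * wj j = nj j * w := by exact_mod_cast hp
    field_simp
    linarith [this]
  exact ⟨key, fun j j' => by rw [key j, key j']⟩
end

section
/- For positive integers n', d, w', define 𝓔(n', d, w') = Σ_{x=1}^{n'} [ Σ_{i=x}^{n'} C(n',i)·(1/w')^i·((w'−1)/w')^{n'−i} ]^d. Then for fixed n' and d, 𝓔 is monotone non-increasing in w': for all integers 1 ≤ w₁ ≤ w₂, 𝓔(n', d, w₂) ≤ 𝓔(n', d, w₁). -/
/-- `𝓔 n' d w'` is the expected size of the minimum-size bucket across `d` rows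
when `n'` element types are hashed uniformly at random into `w'` buckets per row. -/
noncomputable def Ecal (n' d w' : ℕ) : ℝ :=
  ∑ x ∈ Finset.Icc 1 n',
    (∑ i ∈ Finset.Icc x n',
      (n'.choose i : ℝ) * (1 / (w' : ℝ)) ^ i
        * (((w' : ℝ) - 1) / (w' : ℝ)) ^ (n' - i)) ^ d


/-- Binomial tail: probability that Bin(n,p) ≥ x. -/
noncomputable def Stail (n x : ℕ) (p : ℝ) : ℝ :=
  ∑ i ∈ Finset.Icc x n, (n.choose i : ℝ) * p ^ i * (1 - p) ^ (n - i)

lemma Stail_nonneg (n x : ℕ) {p : ℝ} (h0 : 0 ≤ p) (h1 : p ≤ 1) : 0 ≤ Stail n x p :=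
  Finset.sum_nonneg fun i _ => by
    have : (0:ℝ) ≤ 1 - p := by linarith
    positivity

lemma Stail_anti_x (n x : ℕ) {p : ℝ} (h0 : 0 ≤ p) (h1 : p ≤ 1) :
    Stail n (x + 1) p ≤ Stail n x p := by
  apply Finset.sum_le_sum_of_subset_of_nonneg
  · exact Finset.Icc_subset_Icc (Nat.le_succ x) le_rfl
  · intro i _ _
    have : (0:ℝ) ≤ 1 - p := by linarith
    positivity

lemma Stail_zero (n : ℕ) (p : ℝ) : Stail n 0 p = 1 := by
  have h := add_pow p (1 - p) n
  have hpq : p + (1 - p) = 1 := by ring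
  rw [hpq, one_pow] at h
  unfold Stail
  rw [show Finset.Icc 0 n = Finset.range (n + 1) by
    ext i; simp [Nat.lt_succ_iff]]
  have heq : ∑ i ∈ Finset.range (n + 1), (n.choose i : ℝ) * p ^ i * (1 - p) ^ (n - i)
      = ∑ i ∈ Finset.range (n + 1), p ^ i * (1 - p) ^ (n - i) * (n.choose i : ℝ) :=
    Finset.sum_congr rfl fun i _ => by ring
  rw [heq, ← h]

lemma shift_sum (x n : ℕ) (f : ℕ → ℝ) :
    ∑ i ∈ Finset.Icc (x + 1) (n + 1), f i = ∑ j ∈ Finset.Icc x n, f (j + 1) := by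
  rw [← Finset.map_add_right_Icc]
  rw [Finset.sum_map]
  rfl

lemma Stail_rec (n x : ℕ) (p : ℝ) :
    Stail (n + 1) (x + 1) p = p * Stail n x p + (1 - p) * Stail n (x + 1) p := by
  by_cases hx : x ≤ n
  · unfold Stail
    rw [shift_sum]
    have step : ∀ j ∈ Finset.Icc x n,
        ((n+1).choose (j+1) : ℝ) * p ^ (j+1) * (1 - p) ^ (n + 1 - (j+1))
        = p * ((n.choose j : ℝ) * p ^ j * (1 - p) ^ (n - j))
          + (n.choose (j+1) : ℝ) * p ^ (j+1) * (1 - p) ^ (n + 1 - (j+1)) := by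
      intro j _
      rw [Nat.choose_succ_succ, Nat.succ_sub_succ]
      push_cast
      ring
    rw [Finset.sum_congr rfl step, Finset.sum_add_distrib, ← Finset.mul_sum]
    congr 1
    -- second part
    rw [← shift_sum x n (fun i => (n.choose i : ℝ) * p ^ i * (1 - p) ^ (n + 1 - i))]
    rw [Finset.sum_Icc_succ_top (by omega : x + 1 ≤ n + 1)]
    rw [Nat.choose_succ_self, Nat.cast_zero, zero_mul, zero_mul, add_zero]
    rw [Finset.mul_sum]
    apply Finset.sum_congr rfl
    intro i hi
    simp only [Finset.mem_Icc] at hi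
    rw [show n + 1 - i = (n - i) + 1 by omega]
    ring
  · have h1 : Finset.Icc (x+1) (n+1) = ∅ := Finset.Icc_eq_empty (by omega)
    have h2 : Finset.Icc x n = (∅ : Finset ℕ) := Finset.Icc_eq_empty (by omega)
    have h3 : Finset.Icc (x+1) n = (∅ : Finset ℕ) := Finset.Icc_eq_empty (by omega)
    unfold Stail
    rw [h1, h2, h3]
    simp

lemma Stail_mono_p (n : ℕ) : ∀ (x : ℕ) {p q : ℝ}, 0 ≤ q → q ≤ p → p ≤ 1 →
    Stail n x q ≤ Stail n x p := by
  induction n with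
  | zero =>
    intro x p q hq0 hpq hp1
    match x with
    | 0 => rw [Stail_zero, Stail_zero]
    | x + 1 =>
      unfold Stail
      rw [Finset.Icc_eq_empty (by omega)]
      simp
  | succ n ih =>
    intro x p q hq0 hpq hp1
    match x with
    | 0 => rw [Stail_zero, Stail_zero]
    | x + 1 =>
      rw [Stail_rec, Stail_rec]
      have hq1 : q ≤ 1 := le_trans hpq hp1
      have hp0 : 0 ≤ p := le_trans hq0 hpq
      have h1 : Stail n (x+1) q ≤ Stail n x q := Stail_anti_x n x hq0 hq1
      have step1 : q * Stail n x q + (1 - q) * Stail n (x + 1) q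
          ≤ p * Stail n x q + (1 - p) * Stail n (x + 1) q := by nlinarith
      have step2 : p * Stail n x q + (1 - p) * Stail n (x + 1) q
          ≤ p * Stail n x p + (1 - p) * Stail n (x + 1) p := by
        have i1 := ih x hq0 hpq hp1
        have i2 := ih (x+1) hq0 hpq hp1
        have hp1' : (0:ℝ) ≤ 1 - p := by linarith
        have := mul_le_mul_of_nonneg_left i1 hp0
        have := mul_le_mul_of_nonneg_left i2 hp1'
        linarith
      linarith

lemma Ecal_eq (n' d w : ℕ) (hw : 1 ≤ w) :
    Ecal n' d w = ∑ x ∈ Finset.Icc 1 n', (Stail n' x (1 / (w : ℝ))) ^ d := by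
  have hw0 : (w : ℝ) ≠ 0 := by positivity
  unfold Ecal Stail
  apply Finset.sum_congr rfl
  intro x _
  congr 1
  apply Finset.sum_congr rfl
  intro i _
  have : ((w : ℝ) - 1) / (w : ℝ) = 1 - 1 / (w : ℝ) := by field_simp
  rw [this]

/-- For fixed `n'` and `d`, the expected minimum bucket size `𝓔(n', d, w')` is
monotone non-increasing in the number of buckets `w'`. -/
theorem Ecal_antitone_in_width
    (n' d : ℕ) (hn : 0 < n') (hd : 0 < d)
    (w₁ w₂ : ℕ) (hw₁ : 1 ≤ w₁) (hw : w₁ ≤ w₂) :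
    Ecal n' d w₂ ≤ Ecal n' d w₁ := by
  have hw₂ : 1 ≤ w₂ := le_trans hw₁ hw
  rw [Ecal_eq n' d w₁ hw₁, Ecal_eq n' d w₂ hw₂]
  apply Finset.sum_le_sum
  intro x _
  have h1 : (0:ℝ) < w₁ := by exact_mod_cast hw₁
  have h2 : (0:ℝ) < w₂ := by exact_mod_cast hw₂
  have hq0 : (0:ℝ) ≤ 1 / (w₂ : ℝ) := by positivity
  have hpq : 1 / (w₂ : ℝ) ≤ 1 / (w₁ : ℝ) := by
    apply one_div_le_one_div_of_le h1
    exact_mod_cast hw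
  have hp1 : 1 / (w₁ : ℝ) ≤ 1 := by
    rw [div_le_one h1]
    exact_mod_cast hw₁
  have hq1 : 1 / (w₂ : ℝ) ≤ 1 := le_trans hpq hp1
  exact pow_le_pow_left₀ (Stail_nonneg n' x hq0 hq1) (Stail_mono_p n' x hq0 hpq hp1) d
end

section
/- Let U be a set of n element types with strictly positive frequencies f(e) > 0 and total frequency N = Σ_{e ∈ U} f(e), partitioned into ℓ ≥ 2 nonempty groups g_1,…,g_ℓ with |g_j| = n_j and group frequencies N_j = Σ_{e ∈ g_j} f(e). For each j let w_j be a positive integer with n · w_j = n_j · w where w = Σ_{j=1}^ℓ w_j. Suppose the Fair-Count-Min sketch hashes each group g_j uniformly at random into its own w_j buckets, while the standard Count-Min sketch hashes all n elements uniformly at random into all w buckets. Then the price of fairness is strictly negative: 𝓛_FCM − 𝓛_CM = N/w − Σ_{j=1}^{ℓ} (n/n_j)·(N_j/w) < 0, where 𝓛_FCM = n·N/w − Σ_{j=1}^{ℓ} (n/n_j)·(N_j/w) and 𝓛_CM = (n−1)·N/w are the total expected additive errors of the two sketches. -/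
open Finset

/-- Price of fairness of Fair-Count-Min with one row and at least two nonempty
groups, under proportional bucket allocation `n · w_j = n_j · w`: with
`𝓛_FCM = n·N/w − ∑_j (n/n_j)·(N_j/w)` and `𝓛_CM = (n−1)·N/w` the total expected
additive errors of the fair and the standard sketch, the price of fairness
satisfies `𝓛_FCM − 𝓛_CM = N/w − ∑_j (n/n_j)·(N_j/w) < 0`. -/
theorem price_of_fairness_neg
    {U : Type*} [Fintype U] [DecidableEq U]
    (ℓ : ℕ) (hl : 2 ≤ ℓ) (g : Fin ℓ → Finset U)
    (hne : ∀ j, (g j).Nonempty)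
    (hdisj : ∀ j j', j ≠ j' → Disjoint (g j) (g j'))
    (hcover : ∀ e : U, ∃ j, e ∈ g j)
    (n : ℕ) (hn : Fintype.card U = n)
    (nj : Fin ℓ → ℕ) (hnj : ∀ j, (g j).card = nj j)
    (f : U → ℝ) (hf : ∀ e, 0 < f e)
    (N : ℝ) (hN : N = ∑ e, f e)
    (Nj : Fin ℓ → ℝ) (hNj : ∀ j, Nj j = ∑ e ∈ g j, f e)
    (w : ℕ) (wj : Fin ℓ → ℕ) (hwj : ∀ j, 0 < wj j)
    (hw : w = ∑ j, wj j) (hprop : ∀ j, n * wj j = nj j * w)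
    (LFCM LCM : ℝ)
    (hLFCM : LFCM = (n : ℝ) * N / (w : ℝ) - ∑ j, ((n : ℝ) / (nj j : ℝ)) * (Nj j / (w : ℝ)))
    (hLCM : LCM = ((n : ℝ) - 1) * N / (w : ℝ)) :
    LFCM - LCM = N / (w : ℝ) - ∑ j, ((n : ℝ) / (nj j : ℝ)) * (Nj j / (w : ℝ)) ∧
    LFCM - LCM < 0 := by
  have hnt : Nontrivial (Fin ℓ) := Fin.nontrivial_iff_two_le.mpr hl
  have hwpos : 0 < w := by
    rw [hw]
    exact Finset.sum_pos (fun j _ => hwj j) Finset.univ_nonempty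
  have hwR : (0 : ℝ) < (w : ℝ) := by exact_mod_cast hwpos
  -- the groups form a partition of the universe
  have hB : Finset.univ.biUnion g = (Finset.univ : Finset U) := by
    apply Finset.eq_univ_of_forall
    intro e
    obtain ⟨j, hj⟩ := hcover e
    exact Finset.mem_biUnion.mpr ⟨j, Finset.mem_univ j, hj⟩
  have hNsum : N = ∑ j, Nj j := by
    rw [hN, ← hB, Finset.sum_biUnion]
    · exact Finset.sum_congr rfl fun j _ => (hNj j).symm
    · intro a _ b _ hab
      exact hdisj a b hab
  -- each group is strictly smaller than the universe
  have hlt : ∀ j, nj j < n := by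
    intro j
    obtain ⟨j', hj'⟩ := exists_ne j
    have hd : Disjoint (g j) (g j') := hdisj j j' hj'.symm
    have hcard : (g j).card + (g j').card ≤ n := by
      rw [← Finset.card_union_of_disjoint hd, ← hn]
      exact Finset.card_le_univ _
    have h1 : 1 ≤ (g j').card := Finset.card_pos.mpr (hne j')
    have h2 := hnj j
    omega
  have hnjpos : ∀ j, 0 < nj j := fun j => by
    rw [← hnj j]; exact Finset.card_pos.mpr (hne j)
  have hNjpos : ∀ j, 0 < Nj j := fun j => by
    rw [hNj j]
    exact Finset.sum_pos (fun e _ => hf e) (hne j)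
  have hkey : N / (w : ℝ) < ∑ j, ((n : ℝ) / (nj j : ℝ)) * (Nj j / (w : ℝ)) := by
    rw [hNsum, Finset.sum_div]
    apply Finset.sum_lt_sum_of_nonempty Finset.univ_nonempty
    intro j _
    have hnjR : (0 : ℝ) < (nj j : ℝ) := by exact_mod_cast hnjpos j
    have h1 : (1 : ℝ) < (n : ℝ) / (nj j : ℝ) := by
      rw [one_lt_div hnjR]
      exact_mod_cast hlt j
    have h2 : (0 : ℝ) < Nj j / (w : ℝ) := div_pos (hNjpos j) hwR
    nlinarith
  constructor
  · rw [hLFCM, hLCM]; ring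
  · rw [hLFCM, hLCM]
    have : (n : ℝ) * N / (w : ℝ) - ((n : ℝ) - 1) * N / (w : ℝ) = N / (w : ℝ) := by ring
    linarith [hkey, this]
end

section
/- Let U be a set of n element types with frequencies f(e) ≥ 0 and total frequency N = Σ_{e ∈ U} f(e), partitioned into ℓ nonempty groups g_1,…,g_ℓ with |g_j| = n_j and group frequencies N_j = Σ_{e ∈ g_j} f(e). For each j let w_j be a positive integer with n · w_j = n_j · w where w = Σ_{j=1}^ℓ w_j, and let h_j : g_j → {1,…,w_j} be a function such that every bucket of group g_j contains exactly n_j/w_j elements (so each bucket contains exactly n/w elements). With C^j_i = Σ_{e ∈ g_j, h_j(e) = i} f(e), the total additive error satisfies Σ_{j=1}^{ℓ} Σ_{e ∈ g_j} (C^j_{h_j(e)} − f(e)) = N·(n/w − 1). In particular it equals the total additive error N·(n/w − 1) of a standard single-row Count-Min sketch that distributes all n elements uniformly with exactly n/w elements per bucket, so the price of fairness of Fair-Count-Min under uniform hashing is zero. -/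
open Finset

/-- Fair-Count-Min with one row under deterministic uniform hashing: with
proportional bucket allocation `n · w_j = n_j · w` and every bucket of group `g_j`
containing exactly `n_j / w_j` elements, the total additive error equals
`N · (n/w − 1)`, i.e. the total additive error of the standard uniform single-row
Count-Min sketch — so the price of fairness under uniform hashing is zero. -/
theorem total_additive_error_uniform_FCM
    {U : Type*} [Fintype U] [DecidableEq U]
    (ℓ : ℕ) (g : Fin ℓ → Finset U)
    (hne : ∀ j, (g j).Nonempty)
    (hdisj : ∀ j j', j ≠ j' → Disjoint (g j) (g j'))
    (hcover : ∀ e : U, ∃ j, e ∈ g j)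
    (n : ℕ) (hn : Fintype.card U = n)
    (nj : Fin ℓ → ℕ) (hnj : ∀ j, (g j).card = nj j)
    (f : U → ℝ) (hf : ∀ e, 0 ≤ f e)
    (N : ℝ) (hN : N = ∑ e, f e)
    (Nj : Fin ℓ → ℝ) (hNj : ∀ j, Nj j = ∑ e ∈ g j, f e)
    (w : ℕ) (wj : Fin ℓ → ℕ) (hwj : ∀ j, 0 < wj j)
    (hw : w = ∑ j, wj j) (hprop : ∀ j, n * wj j = nj j * w)
    (h : (j : Fin ℓ) → {e // e ∈ g j} → Fin (wj j))
    (hcard : ∀ j (i : Fin (wj j)),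
      (Finset.univ.filter (fun e : {x // x ∈ g j} => h j e = i)).card * wj j = nj j)
    (C : (j : Fin ℓ) → Fin (wj j) → ℝ)
    (hC : ∀ j i, C j i = ∑ e ∈ Finset.univ.filter
        (fun e : {x // x ∈ g j} => h j e = i), f e.1) :
    ∑ j, ∑ e : {x // x ∈ g j}, (C j (h j e) - f e.1) = N * ((n : ℝ) / (w : ℝ) - 1) := by
  rcases Nat.eq_zero_or_pos w with hw0 | hwpos
  · -- degenerate case: w = 0 forces ℓ = 0, hence U empty and N = 0
    have hℓ : ℓ = 0 := by
      by_contra h0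
      have hpos : 0 < ∑ j, wj j :=
        Finset.sum_pos (fun j _ => hwj j)
          (Finset.univ_nonempty_iff.mpr (Fin.pos_iff_nonempty.mp (Nat.pos_of_ne_zero h0)))
      omega
    subst hℓ
    have hU : ∀ e : U, False := fun e => by
      rcases hcover e with ⟨j, _⟩; exact j.elim0
    have hN0 : N = 0 := by
      rw [hN]; exact Finset.sum_eq_zero fun e _ => (hU e).elim
    simp [hN0]
  · have hwR : ((w : ℝ)) ≠ 0 := by positivity
    have key : ∀ j, ∑ e : {x // x ∈ g j}, (C j (h j e) - f e.1)
        = Nj j * ((n : ℝ) / (w : ℝ) - 1) := by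
      intro j
      have hfib : ∀ (F : {x // x ∈ g j} → ℝ),
          ∑ e, F e = ∑ i : Fin (wj j),
            ∑ e ∈ Finset.univ.filter (fun e : {x // x ∈ g j} => h j e = i), F e :=
        fun F => (Finset.sum_fiberwise Finset.univ (h j) F).symm
      have hNjsub : Nj j = ∑ e : {x // x ∈ g j}, f e.1 := by
        rw [hNj j]; exact (Finset.sum_coe_sort (g j) f).symm
      have hNjC : ∑ i : Fin (wj j), C j i = Nj j := by
        rw [hNjsub, hfib (fun e => f e.1)]
        exact Finset.sum_congr rfl fun i _ => hC j i
      have hcardR : ∀ i : Fin (wj j),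
          ((Finset.univ.filter (fun e : {x // x ∈ g j} => h j e = i)).card : ℝ)
            = (n : ℝ) / (w : ℝ) := by
        intro i
        have h1 : (Finset.univ.filter (fun e : {x // x ∈ g j} => h j e = i)).card * w = n := by
          have h2 := hcard j i
          have h3 := hprop j
          have hwjpos := hwj j
          nlinarith [Nat.mul_left_cancel hwjpos (show wj j * ((Finset.univ.filter (fun e : {x // x ∈ g j} => h j e = i)).card * w) = wj j * n by ring_nf; nlinarith)]
        field_simp
        exact_mod_cast h1
      have hCsum : ∑ e : {x // x ∈ g j}, C j (h j e) = ((n : ℝ) / (w : ℝ)) * Nj j := by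
        rw [hfib (fun e => C j (h j e))]
        have : ∀ i : Fin (wj j),
            ∑ e ∈ Finset.univ.filter (fun e : {x // x ∈ g j} => h j e = i), C j (h j e)
              = ((n : ℝ) / (w : ℝ)) * C j i := by
          intro i
          rw [Finset.sum_congr rfl (fun e he => by
            rw [(Finset.mem_filter.mp he).2]), Finset.sum_const, nsmul_eq_mul, hcardR i]
        rw [Finset.sum_congr rfl fun i _ => this i, ← Finset.mul_sum, hNjC]
      rw [Finset.sum_sub_distrib, hCsum, ← hNjsub]
      ring
    rw [Finset.sum_congr rfl fun j _ => key j, ← Finset.sum_mul]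
    congr 1
    have hbi : Finset.univ.biUnion g = Finset.univ := by
      apply Finset.eq_univ_of_forall
      intro e
      rcases hcover e with ⟨j, hj⟩
      exact Finset.mem_biUnion.mpr ⟨j, Finset.mem_univ j, hj⟩
    calc ∑ j, Nj j = ∑ j, ∑ e ∈ g j, f e := Finset.sum_congr rfl fun j _ => hNj j
      _ = ∑ e ∈ Finset.univ.biUnion g, f e :=
          (Finset.sum_biUnion (fun j _ j' _ hjj' => hdisj j j' hjj')).symm
      _ = N := by rw [hbi, hN]
end
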